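/- arXiv:2207.00991 — 7 statements merged into one kernel-verified Lean document; each statement's English description precedes it below -/
import Mathlib

section
/- Nonnegativity of the relative energy: Let p, e, s : (0,∞)² → ℝ be continuously differentiable functions of (ρ,ϑ) satisfying the Gibbs equation (ϑ ∂s/∂ρ = ∂e/∂ρ − p/ρ² and ϑ ∂s/∂ϑ = ∂e/∂ϑ) and the thermodynamic stability conditions (∂p/∂ρ > 0 and ∂e/∂ϑ > 0) on (0,∞)². Then for all ρ, ϑ, ρ̃, θ̃ > 0 and all u, ũ ∈ ℝ^d, the relative energy satisfies E(ρ,ϑ,u | ρ̃,θ̃,ũ) ≥ 0, with equality if and only if ρ = ρ̃, ϑ = θ̃ and u = ũ. -/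
/-!
The relative energy splits as `D + T + K` with `K = ½ρ|u − ũ|²`,
`T = H_θ̃(ρ,ϑ) − H_θ̃(ρ,θ̃)` and `D = H_θ̃(ρ,θ̃) − ∂_ρH_θ̃(ρ̃,θ̃)(ρ − ρ̃) − H_θ̃(ρ̃,θ̃)`.
By the second Gibbs relation `∂_ϑH_θ̃(ρ,ϑ) = ρ ∂_ϑe (ϑ − θ̃)/ϑ`, which by stability has the sign
of `ϑ − θ̃`, so `T > 0` unless `ϑ = θ̃`. By the first, `∂_ρH_θ̃(ρ,θ̃)` is the chemical potential
`e − θ̃s + p/ρ`, whose `ρ`-derivative is `∂_ρp/ρ > 0`; hence `ρ ↦ H_θ̃(ρ,θ̃)` is strictly convex and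
`D`, its gap above the tangent at `ρ̃`, is positive unless `ρ = ρ̃`.
-/

open Real Set

/-- Ballistic free energy `H_θ̃(ρ,ϑ) = ρ(e(ρ,ϑ) − θ̃ s(ρ,ϑ))`. -/
noncomputable def Hball (e s : ℝ → ℝ → ℝ) (Θ ρ ϑ : ℝ) : ℝ := ρ * (e ρ ϑ - Θ * s ρ ϑ)

/-- Relative energy
`E(ρ,ϑ,u | ρ̃,θ̃,ũ) = ½ρ|u−ũ|² + H_θ̃(ρ,ϑ) − ∂_ρH_θ̃(ρ̃,θ̃)(ρ−ρ̃) − H_θ̃(ρ̃,θ̃)`,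
where `∂_ρ H_θ̃` is taken at fixed second argument `θ̃`. -/
noncomputable def relEnergy (e s : ℝ → ℝ → ℝ) {d : ℕ} (ρ ϑ : ℝ)
    (u : EuclideanSpace ℝ (Fin d)) (ρt θt : ℝ) (ut : EuclideanSpace ℝ (Fin d)) : ℝ :=
  2⁻¹ * ρ * ‖u - ut‖ ^ 2 + Hball e s θt ρ ϑ
    - deriv (fun r => Hball e s θt r θt) ρt * (ρ - ρt) - Hball e s θt ρt θt

theorem Convex.apply_lt_apply_of_deriv_sign {S : Set ℝ} {f f' : ℝ → ℝ} {a t : ℝ}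
    (hS : Convex ℝ S) (hf : ∀ x ∈ S, HasDerivAt f (f' x) x)
    (hsign : ∀ x ∈ S, x ≠ a → 0 < (x - a) * f' x) (ha : a ∈ S) (ht : t ∈ S) (hta : t ≠ a) :
    f a < f t := by
  have hmem : ∀ {x y}, x ∈ S → y ∈ S → Icc x y ⊆ S := fun hx hy => hS.ordConnected.out hx hy
  have hcont : ∀ {x y}, x ∈ S → y ∈ S → ContinuousOn f (Icc x y) := fun hx hy z hz =>
    (hf z (hmem hx hy hz)).continuousAt.continuousWithinAt
  rcases hta.lt_or_gt with hlt | hgt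
  · obtain ⟨c, hc, hslope⟩ := exists_hasDerivAt_eq_slope f f' hlt (hcont ht ha)
      fun x hx => hf x (hmem ht ha (Ioo_subset_Icc_self hx))
    have hc_sign := hsign c (hmem ht ha (Ioo_subset_Icc_self hc)) hc.2.ne
    rw [eq_div_iff (sub_ne_zero.mpr hlt.ne')] at hslope
    nlinarith [hc.2]
  · obtain ⟨c, hc, hslope⟩ := exists_hasDerivAt_eq_slope f f' hgt (hcont ha ht)
      fun x hx => hf x (hmem ha ht (Ioo_subset_Icc_self hx))
    have hc_sign := hsign c (hmem ha ht (Ioo_subset_Icc_self hc)) hc.1.ne'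
    rw [eq_div_iff (sub_ne_zero.mpr hgt.ne')] at hslope
    nlinarith [hc.1]

theorem Convex.deriv_mul_sub_lt_sub_of_strictMonoOn {S : Set ℝ} {f f' : ℝ → ℝ} {x y : ℝ}
    (hS : Convex ℝ S) (hf : ∀ z ∈ S, HasDerivAt f (f' z) z) (hf' : StrictMonoOn f' S)
    (hx : x ∈ S) (hy : y ∈ S) (hyx : y ≠ x) :
    f' x * (y - x) < f y - f x := by
  have hgap : ∀ z ∈ S, HasDerivAt (fun r => f r - f' x * r) (f' z - f' x) z := fun z hz => by
    simpa only [mul_one] using (hf z hz).fun_sub ((hasDerivAt_id' z).const_mul (f' x))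
  have hsign : ∀ z ∈ S, z ≠ x → 0 < (z - x) * (f' z - f' x) := fun z hz hzx => by
    rcases hzx.lt_or_gt with hlt | hgt
    · exact mul_pos_of_neg_of_neg (by linarith) (by linarith [hf' hz hx hlt])
    · exact mul_pos (by linarith) (by linarith [hf' hx hz hgt])
  have := hS.apply_lt_apply_of_deriv_sign hgap hsign hx hy hyx
  linarith

theorem nonneg_and_eq_zero_iff_of_pos {a : ℝ} {P : Prop} (hpos : ¬P → 0 < a)
    (hzero : P → a = 0) : 0 ≤ a ∧ (a = 0 ↔ P) := by
  by_cases hP : P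
  · exact ⟨(hzero hP).ge, fun _ => hP, fun _ => hzero hP⟩
  · exact ⟨(hpos hP).le, fun h => absurd h (hpos hP).ne', fun h => absurd h hP⟩

theorem add_add_nonneg_and_eq_zero_iff {a b c : ℝ} {P Q R : Prop}
    (ha : 0 ≤ a ∧ (a = 0 ↔ P)) (hb : 0 ≤ b ∧ (b = 0 ↔ Q)) (hc : 0 ≤ c ∧ (c = 0 ↔ R)) :
    0 ≤ a + b + c ∧ (a + b + c = 0 ↔ P ∧ Q ∧ R) := by
  refine ⟨add_nonneg (add_nonneg ha.1 hb.1) hc.1, ?_⟩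
  rw [add_eq_zero_iff_of_nonneg (add_nonneg ha.1 hb.1) hc.1, add_eq_zero_iff_of_nonneg ha.1 hb.1,
    ha.2, hb.2, hc.2, and_assoc]

theorem ContDiffOn.differentiableAt_of_mem_quadrant {f : ℝ × ℝ → ℝ}
    (hf : ContDiffOn ℝ 1 f (Ioi 0 ×ˢ Ioi 0)) {r t : ℝ} (hr : 0 < r) (ht : 0 < t) :
    DifferentiableAt ℝ f (r, t) :=
  (hf.differentiableOn one_ne_zero).differentiableAt
    ((isOpen_Ioi.prod isOpen_Ioi).mem_nhds ⟨hr, ht⟩)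

theorem DifferentiableAt.hasDerivAt_slice_fst {f : ℝ → ℝ → ℝ} {r t : ℝ}
    (hf : DifferentiableAt ℝ (fun q : ℝ × ℝ => f q.1 q.2) (r, t)) :
    HasDerivAt (fun x => f x t) (deriv (fun x => f x t) r) r :=
  have hslice : DifferentiableAt ℝ (fun x => f x t) r :=
    hf.comp (f := fun x : ℝ => (x, t)) r (differentiableAt_id.prodMk (differentiableAt_const t))
  hslice.hasDerivAt

theorem DifferentiableAt.hasDerivAt_slice_snd {f : ℝ → ℝ → ℝ} {r t : ℝ}
    (hf : DifferentiableAt ℝ (fun q : ℝ × ℝ => f q.1 q.2) (r, t)) :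
    HasDerivAt (fun x => f r x) (deriv (fun x => f r x) t) t :=
  have hslice : DifferentiableAt ℝ (fun x => f r x) t :=
    hf.comp (f := fun x : ℝ => (r, x)) t ((differentiableAt_const r).prodMk differentiableAt_id)
  hslice.hasDerivAt

section Thermodynamics

variable {p e s : ℝ → ℝ → ℝ}

noncomputable def gibbsFreeEnergy (p e s : ℝ → ℝ → ℝ) (ρ ϑ : ℝ) : ℝ :=
  e ρ ϑ - ϑ * s ρ ϑ + p ρ ϑ / ρ

theorem hasDerivAt_Hball_fst {r θ : ℝ} (hr : r ≠ 0)
    (he : DifferentiableAt ℝ (fun q : ℝ × ℝ => e q.1 q.2) (r, θ))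
    (hs : DifferentiableAt ℝ (fun q : ℝ × ℝ => s q.1 q.2) (r, θ))
    (hGibbs : θ * deriv (fun x => s x θ) r = deriv (fun x => e x θ) r - p r θ / r ^ 2) :
    HasDerivAt (fun x => Hball e s θ x θ) (gibbsFreeEnergy p e s r θ) r := by
  refine ((hasDerivAt_id' r).mul
    (he.hasDerivAt_slice_fst.sub (hs.hasDerivAt_slice_fst.const_mul θ))).congr_deriv ?_
  rw [gibbsFreeEnergy, mul_sub r, hGibbs, Pi.sub_apply]
  field_simp
  ring

theorem hasDerivAt_gibbsFreeEnergy_fst {r θ : ℝ} (hr : r ≠ 0)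
    (hp : DifferentiableAt ℝ (fun q : ℝ × ℝ => p q.1 q.2) (r, θ))
    (he : DifferentiableAt ℝ (fun q : ℝ × ℝ => e q.1 q.2) (r, θ))
    (hs : DifferentiableAt ℝ (fun q : ℝ × ℝ => s q.1 q.2) (r, θ))
    (hGibbs : θ * deriv (fun x => s x θ) r = deriv (fun x => e x θ) r - p r θ / r ^ 2) :
    HasDerivAt (fun x => gibbsFreeEnergy p e s x θ) (deriv (fun x => p x θ) r / r) r := by
  refine ((he.hasDerivAt_slice_fst.sub (hs.hasDerivAt_slice_fst.const_mul θ)).add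
    (hp.hasDerivAt_slice_fst.div (hasDerivAt_id' r) hr)).congr_deriv ?_
  rw [hGibbs]
  field_simp
  ring

theorem hasDerivAt_Hball_snd {ρ t θ : ℝ} (ht : t ≠ 0)
    (he : DifferentiableAt ℝ (fun q : ℝ × ℝ => e q.1 q.2) (ρ, t))
    (hs : DifferentiableAt ℝ (fun q : ℝ × ℝ => s q.1 q.2) (ρ, t))
    (hGibbs : t * deriv (fun τ => s ρ τ) t = deriv (fun τ => e ρ τ) t) :
    HasDerivAt (fun τ => Hball e s θ ρ τ) (ρ * deriv (fun τ => e ρ τ) t * (t - θ) / t) t := by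
  refine ((he.hasDerivAt_slice_snd.sub
    (hs.hasDerivAt_slice_snd.const_mul θ)).const_mul ρ).congr_deriv ?_
  rw [eq_div_iff ht, ← hGibbs]
  ring

theorem strictMonoOn_gibbsFreeEnergy {θ : ℝ} (hθ : 0 < θ)
    (hp : ContDiffOn ℝ 1 (fun q : ℝ × ℝ => p q.1 q.2) (Ioi 0 ×ˢ Ioi 0))
    (he : ContDiffOn ℝ 1 (fun q : ℝ × ℝ => e q.1 q.2) (Ioi 0 ×ˢ Ioi 0))
    (hs : ContDiffOn ℝ 1 (fun q : ℝ × ℝ => s q.1 q.2) (Ioi 0 ×ˢ Ioi 0))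
    (hGibbs : ∀ r, 0 < r →
      θ * deriv (fun x => s x θ) r = deriv (fun x => e x θ) r - p r θ / r ^ 2)
    (hStab : ∀ r, 0 < r → 0 < deriv (fun x => p x θ) r) :
    StrictMonoOn (fun r => gibbsFreeEnergy p e s r θ) (Ioi 0) := by
  have hderiv : ∀ r ∈ Ioi (0 : ℝ), HasDerivAt (fun x => gibbsFreeEnergy p e s x θ)
      (deriv (fun x => p x θ) r / r) r := fun r hr =>
    hasDerivAt_gibbsFreeEnergy_fst (ne_of_gt hr) (hp.differentiableAt_of_mem_quadrant hr hθ)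
      (he.differentiableAt_of_mem_quadrant hr hθ) (hs.differentiableAt_of_mem_quadrant hr hθ)
      (hGibbs r hr)
  refine strictMonoOn_of_deriv_pos (convex_Ioi 0)
    (fun r hr => (hderiv r hr).continuousAt.continuousWithinAt) fun r hr => ?_
  rw [interior_Ioi] at hr
  rw [(hderiv r hr).deriv]
  exact div_pos (hStab r hr) hr

theorem gibbsFreeEnergy_mul_sub_lt_Hball_sub {θ ρ ρt : ℝ} (hθ : 0 < θ)
    (hp : ContDiffOn ℝ 1 (fun q : ℝ × ℝ => p q.1 q.2) (Ioi 0 ×ˢ Ioi 0))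
    (he : ContDiffOn ℝ 1 (fun q : ℝ × ℝ => e q.1 q.2) (Ioi 0 ×ˢ Ioi 0))
    (hs : ContDiffOn ℝ 1 (fun q : ℝ × ℝ => s q.1 q.2) (Ioi 0 ×ˢ Ioi 0))
    (hGibbs : ∀ r, 0 < r →
      θ * deriv (fun x => s x θ) r = deriv (fun x => e x θ) r - p r θ / r ^ 2)
    (hStab : ∀ r, 0 < r → 0 < deriv (fun x => p x θ) r)
    (hρ : 0 < ρ) (hρt : 0 < ρt) (hne : ρ ≠ ρt) :
    gibbsFreeEnergy p e s ρt θ * (ρ - ρt) < Hball e s θ ρ θ - Hball e s θ ρt θ :=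
  (convex_Ioi 0).deriv_mul_sub_lt_sub_of_strictMonoOn
    (fun r (hr : 0 < r) => hasDerivAt_Hball_fst hr.ne' (he.differentiableAt_of_mem_quadrant hr hθ)
      (hs.differentiableAt_of_mem_quadrant hr hθ) (hGibbs r hr))
    (strictMonoOn_gibbsFreeEnergy hθ hp he hs hGibbs hStab) hρt hρ hne

theorem Hball_lt_Hball_of_ne {ρ θ ϑ : ℝ} (hρ : 0 < ρ) (hθ : 0 < θ) (hϑ : 0 < ϑ)
    (he : ContDiffOn ℝ 1 (fun q : ℝ × ℝ => e q.1 q.2) (Ioi 0 ×ˢ Ioi 0))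
    (hs : ContDiffOn ℝ 1 (fun q : ℝ × ℝ => s q.1 q.2) (Ioi 0 ×ˢ Ioi 0))
    (hGibbs : ∀ t, 0 < t → t * deriv (fun τ => s ρ τ) t = deriv (fun τ => e ρ τ) t)
    (hStab : ∀ t, 0 < t → 0 < deriv (fun τ => e ρ τ) t) (hne : ϑ ≠ θ) :
    Hball e s θ ρ θ < Hball e s θ ρ ϑ := by
  refine (convex_Ioi 0).apply_lt_apply_of_deriv_sign
    (fun t (ht : 0 < t) => hasDerivAt_Hball_snd ht.ne'
      (he.differentiableAt_of_mem_quadrant hρ ht) (hs.differentiableAt_of_mem_quadrant hρ ht)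
      (hGibbs t ht)) (fun t (ht : 0 < t) htθ => ?_) hθ hϑ hne
  rw [show (t - θ) * (ρ * deriv (fun τ => e ρ τ) t * (t - θ) / t)
      = ρ * deriv (fun τ => e ρ τ) t * (t - θ) ^ 2 / t by ring]
  exact div_pos (mul_pos (mul_pos hρ (hStab t ht)) (sq_pos_of_ne_zero (sub_ne_zero.mpr htθ))) ht

theorem relEnergy_eq_add {d : ℕ} {ρ ϑ ρt θt μ : ℝ} {u ut : EuclideanSpace ℝ (Fin d)}
    (hμ : HasDerivAt (fun r => Hball e s θt r θt) μ ρt) :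
    relEnergy e s ρ ϑ u ρt θt ut = (Hball e s θt ρ θt - μ * (ρ - ρt) - Hball e s θt ρt θt)
      + (Hball e s θt ρ ϑ - Hball e s θt ρ θt) + 2⁻¹ * ρ * ‖u - ut‖ ^ 2 := by
  rw [relEnergy, hμ.deriv]
  ring

end Thermodynamics

/-- **Nonnegativity of the relative energy.** Under Gibbs' equation and the
hypothesis of thermodynamic stability, `E(ρ,ϑ,u | ρ̃,θ̃,ũ) ≥ 0`, with equality if and
only if `ρ = ρ̃`, `ϑ = θ̃` and `u = ũ`. -/
theorem relative_energy_nonneg {d : ℕ}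
    (p e s : ℝ → ℝ → ℝ)
    (hp : ContDiffOn ℝ 1 (fun q : ℝ × ℝ => p q.1 q.2) (Ioi 0 ×ˢ Ioi 0))
    (he : ContDiffOn ℝ 1 (fun q : ℝ × ℝ => e q.1 q.2) (Ioi 0 ×ˢ Ioi 0))
    (hs : ContDiffOn ℝ 1 (fun q : ℝ × ℝ => s q.1 q.2) (Ioi 0 ×ˢ Ioi 0))
    (hGibbs : ∀ ρ ϑ : ℝ, 0 < ρ → 0 < ϑ →
      (ϑ * deriv (fun r => s r ϑ) ρ = deriv (fun r => e r ϑ) ρ - p ρ ϑ / ρ ^ 2) ∧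
      (ϑ * deriv (fun t => s ρ t) ϑ = deriv (fun t => e ρ t) ϑ))
    (hStab : ∀ ρ ϑ : ℝ, 0 < ρ → 0 < ϑ →
      0 < deriv (fun r => p r ϑ) ρ ∧ 0 < deriv (fun t => e ρ t) ϑ)
    (ρ ϑ ρt θt : ℝ) (hρ : 0 < ρ) (hϑ : 0 < ϑ) (hρt : 0 < ρt) (hθt : 0 < θt)
    (u ut : EuclideanSpace ℝ (Fin d)) :
    0 ≤ relEnergy e s ρ ϑ u ρt θt ut ∧
    (relEnergy e s ρ ϑ u ρt θt ut = 0 ↔ ρ = ρt ∧ ϑ = θt ∧ u = ut) := by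
  have hμ := hasDerivAt_Hball_fst hρt.ne' (he.differentiableAt_of_mem_quadrant hρt hθt)
    (hs.differentiableAt_of_mem_quadrant hρt hθt) (hGibbs ρt θt hρt hθt).1
  rw [relEnergy_eq_add hμ]
  refine add_add_nonneg_and_eq_zero_iff (nonneg_and_eq_zero_iff_of_pos ?_ ?_)
    (nonneg_and_eq_zero_iff_of_pos ?_ ?_) (nonneg_and_eq_zero_iff_of_pos ?_ ?_)
  · intro hne
    linarith [gibbsFreeEnergy_mul_sub_lt_Hball_sub hθt hp he hs
      (fun r hr => (hGibbs r θt hr hθt).1) (fun r hr => (hStab r θt hr hθt).1) hρ hρt hne]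
  · rintro rfl
    ring
  · intro hne
    exact sub_pos.mpr (Hball_lt_Hball_of_ne hρ hθt hϑ he hs
      (fun t ht => (hGibbs ρ t hρ ht).2) (fun t ht => (hStab ρ t hρ ht).2) hne)
  · rintro rfl
    exact sub_self _
  · intro hne
    have := norm_pos_iff.mpr (sub_ne_zero.mpr hne)
    positivity
  · rintro rfl
    simp
end

section
/- Convexity of the internal energy in conservative entropy variables for the ideal gas: Let c_v > 0. The function (ρ, S) ↦ c_v ρ^{1 + 1/c_v} e^{S/(c_v ρ)} is convex on the convex set (0,∞) × ℝ. -/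
/-!
Writing `p = 1 + 1/c_v`, the energy is `c_v (ρ e^{S/((c_v+1)ρ)})^p`. The inner function is the
perspective `ρ φ(S/ρ)` of the convex function `φ(u) = e^{u/(c_v+1)}`, hence convex and positive,
and `x ↦ x^p` is convex and nondecreasing on `[0,∞)` because `p ≥ 1`.
-/

open Real Set

theorem ConvexOn.comp_of_mapsTo {𝕜 E α β : Type*} [Semiring 𝕜] [PartialOrder 𝕜]
    [AddCommMonoid E] [SMul 𝕜 E] [AddCommMonoid α] [PartialOrder α] [SMul 𝕜 α]
    [AddCommMonoid β] [PartialOrder β] [SMul 𝕜 β] {s : Set E} {t : Set β} {f : E → β}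
    {g : β → α} (hg : ConvexOn 𝕜 t g) (hf : ConvexOn 𝕜 s f) (hg' : MonotoneOn g t)
    (hst : MapsTo f s t) : ConvexOn 𝕜 s (g ∘ f) :=
  ⟨hf.1, fun _ hx _ hy _ _ ha hb hab =>
    (hg' (hst <| hf.1 hx hy ha hb hab) (hg.1 (hst hx) (hst hy) ha hb hab) <|
      hf.2 hx hy ha hb hab).trans <| hg.2 (hst hx) (hst hy) ha hb hab⟩

theorem convexOn_perspective {E : Type*} [AddCommGroup E] [Module ℝ E] {φ : E → ℝ}
    (hφ : ConvexOn ℝ univ φ) :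
    ConvexOn ℝ (Ioi (0 : ℝ) ×ˢ (univ : Set E)) fun q => q.1 * φ (q.1⁻¹ • q.2) := by
  refine ⟨(convex_Ioi 0).prod convex_univ, ?_⟩
  rintro ⟨t₁, x₁⟩ ⟨ht₁ : 0 < t₁, -⟩ ⟨t₂, x₂⟩ ⟨ht₂ : 0 < t₂, -⟩ a b ha hb hab
  have ht : 0 < a * t₁ + b * t₂ := convex_Ioi (0 : ℝ) ht₁ ht₂ ha hb hab
  set t := a * t₁ + b * t₂
  have hweights : a * t₁ / t + b * t₂ / t = 1 := by rw [← add_div, div_self ht.ne']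
  have hmean : t⁻¹ • (a • x₁ + b • x₂)
      = (a * t₁ / t) • (t₁⁻¹ • x₁) + (b * t₂ / t) • (t₂⁻¹ • x₂) := by
    simp only [smul_add, smul_smul]
    congr 2 <;> field_simp
  calc t * φ (t⁻¹ • (a • x₁ + b • x₂))
      ≤ t * ((a * t₁ / t) • φ (t₁⁻¹ • x₁) + (b * t₂ / t) • φ (t₂⁻¹ • x₂)) := by
        rw [hmean]
        gcongr
        exact hφ.2 (mem_univ _) (mem_univ _) (by positivity) (by positivity) hweights
    _ = a • (t₁ * φ (t₁⁻¹ • x₁)) + b • (t₂ * φ (t₂⁻¹ • x₂)) := by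
        simp only [smul_eq_mul]
        field_simp

/-- **Convexity of the internal energy in conservative entropy variables for the
ideal gas.** For `c_v > 0`, the map `(ρ, S) ↦ c_v ρ^{1 + 1/c_v} e^{S/(c_v ρ)}`
is convex on `(0,∞) × ℝ`. -/
theorem ideal_gas_internal_energy_convex (cv : ℝ) (hcv : 0 < cv) :
    ConvexOn ℝ (Ioi (0 : ℝ) ×ˢ (univ : Set ℝ))
      (fun q : ℝ × ℝ => cv * q.1 ^ (1 + 1 / cv) * Real.exp (q.2 / (cv * q.1))) := by
  have hp : 1 ≤ 1 + 1 / cv := le_add_of_nonneg_right (by positivity)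
  have hφ : ConvexOn ℝ univ fun u : ℝ => exp ((cv + 1)⁻¹ * u) :=
    convexOn_exp.comp_linearMap (LinearMap.mulLeft ℝ (cv + 1)⁻¹)
  have hpow := (convexOn_rpow hp).comp_of_mapsTo (convexOn_perspective hφ)
    (monotoneOn_rpow_Ici_of_exponent_nonneg (by linarith))
    fun q (hq : q ∈ Ioi 0 ×ˢ univ) => mem_Ici.2 (by have : 0 < q.1 := hq.1; positivity)
  refine (hpow.smul hcv.le).congr fun q (hq : q ∈ Ioi 0 ×ˢ univ) => ?_
  have hρ : 0 < q.1 := hq.1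
  simp only [Function.comp_apply, smul_eq_mul]
  rw [mul_rpow hρ.le (exp_pos _).le, ← exp_mul, ← mul_assoc]
  congr 2
  field_simp
end

section
/- Convexity of the total energy in conservative variables for the ideal gas: Let c_v > 0 and d ≥ 1. The total energy functional E(ρ, S, m) = |m|²/(2ρ) + c_v ρ^{1 + 1/c_v} e^{S/(c_v ρ)} is convex on the convex set (0,∞) × ℝ × ℝ^d. -/
open Real Set

/-!
Both terms have the form `ρ φ(u)` with `φ` convex and `ρ u` convex. For the kinetic energy
`u = ρ⁻¹ (S, m)`, `φ(S, m) = ‖m‖²` and `ρ u` is linear; for the internal energy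
`c_v ρ^{1+1/c_v} e^{S/(c_v ρ)} = c_v ρ exp u` with `u = (log ρ + S / ρ) / c_v`, so that
`ρ u = (ρ log ρ + S) / c_v`, and `φ = exp` is nondecreasing. At `ρ = a ρ₁ + b ρ₂`, `u` is then
equal to, resp. bounded by, the `(a ρ₁ / ρ, b ρ₂ / ρ)`-combination of `u₁, u₂`, and Jensen's
inequality for `φ` finishes.
-/

section Perspective

variable {E : Type*} [AddCommGroup E] [Module ℝ E]

lemma perspective_weights {ρ₁ ρ₂ a b : ℝ} (h₁ : 0 < ρ₁) (h₂ : 0 < ρ₂) (ha : 0 ≤ a) (hb : 0 ≤ b)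
    (hab : a + b = 1) :
    0 < a * ρ₁ + b * ρ₂ ∧ 0 ≤ a * ρ₁ / (a * ρ₁ + b * ρ₂) ∧ 0 ≤ b * ρ₂ / (a * ρ₁ + b * ρ₂) ∧
      a * ρ₁ / (a * ρ₁ + b * ρ₂) + b * ρ₂ / (a * ρ₁ + b * ρ₂) = 1 := by
  have hρ : 0 < a * ρ₁ + b * ρ₂ := by
    rcases ha.eq_or_lt with rfl | ha
    · simp_all
    · positivity
  exact ⟨hρ, by positivity, by positivity, by field_simp⟩

theorem ConvexOn.perspective {f : E → ℝ} (hf : ConvexOn ℝ univ f) :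
    ConvexOn ℝ (Ioi 0 ×ˢ univ) fun p : ℝ × E ↦ p.1 * f (p.1⁻¹ • p.2) := by
  refine ⟨(convex_Ioi 0).prod convex_univ, ?_⟩
  rintro ⟨ρ₁, x₁⟩ ⟨h₁ : 0 < ρ₁, -⟩ ⟨ρ₂, x₂⟩ ⟨h₂ : 0 < ρ₂, -⟩ a b ha hb hab
  obtain ⟨hρ, hα, hβ, hαβ⟩ := perspective_weights (b := b) (ρ₂ := ρ₂) h₁ h₂ ha hb hab
  simp only [Prod.smul_mk, Prod.mk_add_mk, smul_eq_mul] at *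
  set ρ := a * ρ₁ + b * ρ₂
  have hx : ρ⁻¹ • (a • x₁ + b • x₂) =
      (a * ρ₁ / ρ) • (ρ₁⁻¹ • x₁) + (b * ρ₂ / ρ) • (ρ₂⁻¹ • x₂) := by
    simp only [smul_add, smul_smul]
    congr 2 <;> field_simp
  calc ρ * f (ρ⁻¹ • (a • x₁ + b • x₂))
      ≤ ρ * ((a * ρ₁ / ρ) * f (ρ₁⁻¹ • x₁) + (b * ρ₂ / ρ) * f (ρ₂⁻¹ • x₂)) := by
        rw [hx]
        exact mul_le_mul_of_nonneg_left (hf.2 trivial trivial hα hβ hαβ) hρ.le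
    _ = a * (ρ₁ * f (ρ₁⁻¹ • x₁)) + b * (ρ₂ * f (ρ₂⁻¹ • x₂)) := by
        field_simp

theorem ConvexOn.perspective_of_monotone {s : Set E} {u : ℝ × E → ℝ} {φ : ℝ → ℝ}
    (hu : ConvexOn ℝ (Ioi 0 ×ˢ s) fun p ↦ p.1 * u p) (hφ : ConvexOn ℝ univ φ)
    (hφ_mono : Monotone φ) :
    ConvexOn ℝ (Ioi 0 ×ˢ s) fun p ↦ p.1 * φ (u p) := by
  refine ⟨hu.1, ?_⟩
  rintro ⟨ρ₁, x₁⟩ hp₁ ⟨ρ₂, x₂⟩ hp₂ a b ha hb hab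
  obtain ⟨hρ, hα, hβ, hαβ⟩ := perspective_weights (b := b) (ρ₂ := ρ₂) hp₁.1 hp₂.1 ha hb hab
  have hu_le := hu.2 hp₁ hp₂ ha hb hab
  simp only [Prod.smul_mk, Prod.mk_add_mk, smul_eq_mul] at *
  set ρ := a * ρ₁ + b * ρ₂
  have hcomb : u (ρ, a • x₁ + b • x₂) ≤
      (a * ρ₁ / ρ) * u (ρ₁, x₁) + (b * ρ₂ / ρ) * u (ρ₂, x₂) := by
    rw [← mul_le_mul_iff_of_pos_left hρ]
    convert hu_le using 1
    field_simp
  calc ρ * φ (u (ρ, a • x₁ + b • x₂))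
      ≤ ρ * ((a * ρ₁ / ρ) * φ (u (ρ₁, x₁)) + (b * ρ₂ / ρ) * φ (u (ρ₂, x₂))) := by
        refine mul_le_mul_of_nonneg_left ((hφ_mono hcomb).trans ?_) hρ.le
        exact hφ.2 trivial trivial hα hβ hαβ
    _ = a * (ρ₁ * φ (u (ρ₁, x₁))) + b * (ρ₂ * φ (u (ρ₂, x₂))) := by
        field_simp

end Perspective

lemma rpow_one_add_inv_mul_exp {c r : ℝ} (hr : 0 < r) (s : ℝ) :
    r ^ (1 + 1 / c) * exp (s / (c * r)) = r * exp ((log r + s / r) / c) := by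
  rw [rpow_add hr, rpow_one, rpow_def_of_pos hr, mul_assoc, ← exp_add]
  congr 2
  field_simp

theorem ideal_gas_total_energy_convex_general (cv : ℝ) (hcv : 0 < cv) (d : ℕ) :
    ConvexOn ℝ (Ioi (0 : ℝ) ×ˢ (univ : Set (ℝ × EuclideanSpace ℝ (Fin d))))
      (fun q : ℝ × ℝ × EuclideanSpace ℝ (Fin d) =>
        ‖q.2.2‖ ^ 2 / (2 * q.1)
          + cv * q.1 ^ (1 + 1 / cv) * Real.exp (q.2.1 / (cv * q.1))) := by
  set E := EuclideanSpace ℝ (Fin d)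
  have hkin : ConvexOn ℝ (Ioi 0 ×ˢ univ) fun p : ℝ × ℝ × E ↦ p.1 * ‖(p.1⁻¹ • p.2).2‖ ^ 2 :=
    ((convexOn_univ_norm.pow (fun _ _ ↦ norm_nonneg _) 2).comp_linearMap
      (LinearMap.snd ℝ ℝ E)).perspective
  have hmul_log : ConvexOn ℝ (Ioi 0 ×ˢ univ) fun p : ℝ × ℝ × E ↦ p.1 * log p.1 := by
    rw [prod_univ]
    exact (convexOn_mul_log.subset Ioi_subset_Ici_self (convex_Ioi 0)).comp_linearMap
      (LinearMap.fst ℝ ℝ (ℝ × E))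
  have hint : ConvexOn ℝ (Ioi 0 ×ˢ univ)
      fun p : ℝ × ℝ × E ↦ p.1 * exp ((log p.1 + p.2.1 / p.1) / cv) := by
    refine ConvexOn.perspective_of_monotone ?_ convexOn_exp exp_monotone
    refine ((hmul_log.add (((LinearMap.fst ℝ ℝ E).comp (LinearMap.snd ℝ ℝ (ℝ × E))).convexOn
      hmul_log.1)).smul (inv_nonneg.2 hcv.le)).congr fun p ⟨(hp : 0 < p.1), _⟩ ↦ ?_
    simp only [LinearMap.coe_comp, LinearMap.coe_fst, LinearMap.coe_snd, Pi.add_apply,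
      Function.comp_apply, smul_eq_mul]
    field_simp
  refine ((hkin.smul (by norm_num : (0:ℝ) ≤ 1 / 2)).add (hint.smul hcv.le)).congr
    fun p ⟨(hp : 0 < p.1), _⟩ ↦ ?_
  simp only [Pi.add_apply, Prod.smul_snd, norm_smul, norm_inv, norm_of_nonneg hp.le, smul_eq_mul,
    mul_assoc, rpow_one_add_inv_mul_exp hp]
  field_simp

/-- **Convexity of the total energy in conservative variables for the ideal gas.**
For `c_v > 0` and `d ≥ 1`, the total energy
`E(ρ, S, m) = |m|²/(2ρ) + c_v ρ^{1 + 1/c_v} e^{S/(c_v ρ)}`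
is convex on `(0,∞) × ℝ × ℝ^d`. -/
theorem ideal_gas_total_energy_convex (cv : ℝ) (hcv : 0 < cv) (d : ℕ) (hd : 1 ≤ d) :
    ConvexOn ℝ (Ioi (0 : ℝ) ×ˢ (univ : Set (ℝ × EuclideanSpace ℝ (Fin d))))
      (fun q : ℝ × ℝ × EuclideanSpace ℝ (Fin d) =>
        ‖q.2.2‖ ^ 2 / (2 * q.1)
          + cv * q.1 ^ (1 + 1 / cv) * Real.exp (q.2.1 / (cv * q.1))) :=
  ideal_gas_total_energy_convex_general cv hcv d
end

section
/- Pointwise bound for a monotone entropy function satisfying the third law: Let c > 0 and let S ∈ C¹((0,∞)) satisfy S′(q) < 0 and −S′(q) ≤ (3c)/(2q) for all q > 0, and lim_{q→∞} S(q) = 0. Then S(q) > 0 for all q > 0, and there is a constant C > 0, depending only on c and S(1), such that for all ρ > 0 and ϑ > 0: ρ S(ρ/ϑ^{3/2}) ≤ C(ρ + ρ|log ρ| + ρ max(log ϑ, 0)). -/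
open Real Set Filter

/-! On `(0, ∞)` the function `S` is strictly decreasing, hence positive since it tends to `0` at
infinity, while `S + (3c/2) log` is increasing because `-S′(q) ≤ 3c/(2q)`. Comparing with `q = 1`
gives `S q ≤ S 1 + (3c/2) [-log q]⁺`, and for `q = ρ / ϑ^{3/2}` we have
`[-log q]⁺ ≤ |log ρ| + (3/2) [log ϑ]⁺`. -/

lemma strictAntiOn_Ioi_of_deriv_neg {a : ℝ} {S : ℝ → ℝ} (hS : ∀ q, a < q → deriv S q < 0) :
    StrictAntiOn S (Ioi a) := by
  -- `deriv` is `0` at points of non-differentiability, so a negative `deriv` forces differentiability.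
  have hdiff : DifferentiableOn ℝ S (Ioi a) := fun q hq =>
    (differentiableAt_of_deriv_ne_zero (hS q hq).ne).differentiableWithinAt
  refine strictAntiOn_of_deriv_neg (convex_Ioi a) hdiff.continuousOn fun q hq => ?_
  rw [interior_Ioi] at hq
  exact hS q hq

lemma StrictAntiOn.pos_of_tendsto_atTop_zero {a : ℝ} {S : ℝ → ℝ} (hS : StrictAntiOn S (Ioi a))
    (hlim : Tendsto S atTop (nhds 0)) {q : ℝ} (hq : a < q) : 0 < S q := by
  have hnonneg : 0 ≤ S (q + 1) := le_of_tendsto hlim <| by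
    filter_upwards [eventually_ge_atTop (q + 1)] with y hy
    exact hS.antitoneOn (mem_Ioi.mpr (by linarith)) (mem_Ioi.mpr (by linarith)) hy
  exact hnonneg.trans_lt (hS hq (mem_Ioi.mpr (by linarith)) (lt_add_one q))

lemma monotoneOn_add_mul_log {S : ℝ → ℝ} {k : ℝ} (hdiff : ∀ q, 0 < q → DifferentiableAt ℝ S q)
    (hS : ∀ q, 0 < q → -deriv S q ≤ k / q) :
    MonotoneOn (fun t => S t + k * log t) (Ioi 0) := by
  have hderiv : ∀ q, 0 < q → HasDerivAt (fun t => S t + k * log t) (deriv S q + k * q⁻¹) q :=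
    fun q hq => (hdiff q hq).hasDerivAt.add ((hasDerivAt_log hq.ne').const_mul k)
  refine monotoneOn_of_deriv_nonneg (convex_Ioi 0)
    (fun q hq => (hderiv q hq).continuousAt.continuousWithinAt) ?_ ?_ <;> rw [interior_Ioi]
  · exact fun q hq => (hderiv q hq).differentiableAt.differentiableWithinAt
  · intro q hq
    rw [(hderiv q hq).deriv, ← div_eq_mul_inv]
    linarith [hS q hq]

lemma le_add_mul_max_neg_log {S : ℝ → ℝ} {k : ℝ} (hk : 0 ≤ k) (hanti : AntitoneOn S (Ioi 0))
    (hmono : MonotoneOn (fun t => S t + k * log t) (Ioi 0)) {q : ℝ} (hq : 0 < q) :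
    S q ≤ S 1 + k * max (-log q) 0 := by
  rcases le_or_gt q 1 with hq1 | hq1
  · have h := hmono (mem_Ioi.mpr hq) (mem_Ioi.mpr one_pos) hq1
    simp only [log_one, mul_zero, add_zero] at h
    nlinarith [le_max_left (-log q) 0]
  · have h := hanti (mem_Ioi.mpr one_pos) (mem_Ioi.mpr hq) hq1.le
    nlinarith [le_max_right (-log q) 0]

lemma max_neg_log_div_rpow_le {ρ ϑ : ℝ} (hρ : 0 < ρ) (hϑ : 0 < ϑ) :
    max (-log (ρ / ϑ ^ ((3 : ℝ) / 2))) 0 ≤ |log ρ| + 3 / 2 * max (log ϑ) 0 := by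
  rw [log_div hρ.ne' (rpow_pos_of_pos hϑ _).ne', log_rpow hϑ]
  apply max_le <;>
    linarith [neg_le_abs (log ρ), abs_nonneg (log ρ), le_max_left (log ϑ) 0, le_max_right (log ϑ) 0]

theorem entropy_pointwise_bound_general (c : ℝ) (hc : 0 < c) (S : ℝ → ℝ)
    (hS' : ∀ q : ℝ, 0 < q → deriv S q < 0 ∧ -deriv S q ≤ 3 * c / (2 * q))
    (hS3rd : Tendsto S atTop (nhds 0)) :
    (∀ q : ℝ, 0 < q → 0 < S q) ∧
    ∃ C : ℝ, 0 < C ∧ ∀ ρ ϑ : ℝ, 0 < ρ → 0 < ϑ →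
      ρ * S (ρ / ϑ ^ ((3 : ℝ) / 2))
        ≤ C * (ρ + ρ * |Real.log ρ| + ρ * max (Real.log ϑ) 0) := by
  have hanti := strictAntiOn_Ioi_of_deriv_neg fun q hq => (hS' q hq).1
  have hpos : ∀ q : ℝ, 0 < q → 0 < S q := fun q hq => hanti.pos_of_tendsto_atTop_zero hS3rd hq
  have hmono : MonotoneOn (fun t => S t + 3 * c / 2 * log t) (Ioi 0) :=
    monotoneOn_add_mul_log (fun q hq => differentiableAt_of_deriv_ne_zero (hS' q hq).1.ne)
      fun q hq => by simpa only [div_div] using (hS' q hq).2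
  refine ⟨hpos, S 1 + 9 * c / 4, by linarith [hpos 1 one_pos], fun ρ ϑ hρ hϑ => ?_⟩
  have hq : 0 < ρ / ϑ ^ ((3 : ℝ) / 2) := div_pos hρ (rpow_pos_of_pos hϑ _)
  have hS1 := hpos 1 one_pos
  have habs := mul_nonneg hρ.le (abs_nonneg (log ρ))
  have hmax := mul_nonneg hρ.le (le_max_right (log ϑ) 0)
  calc ρ * S (ρ / ϑ ^ ((3 : ℝ) / 2))
      ≤ ρ * (S 1 + 3 * c / 2 * (|log ρ| + 3 / 2 * max (log ϑ) 0)) := by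
        gcongr
        exact (le_add_mul_max_neg_log (by positivity) hanti.antitoneOn hmono hq).trans
          (by gcongr; exact max_neg_log_div_rpow_le hρ hϑ)
    _ ≤ (S 1 + 9 * c / 4) * (ρ + ρ * |log ρ| + ρ * max (log ϑ) 0) := by
        nlinarith [mul_nonneg habs hS1.le, mul_nonneg hmax hS1.le, mul_nonneg habs hc.le]

/-- **Pointwise bound for a monotone entropy function satisfying the third law.**
If `S ∈ C¹((0,∞))` with `S′ < 0`, `−S′(q) ≤ 3c/(2q)` and `S(q) → 0` as `q → ∞`,
then `S > 0` on `(0,∞)` and there is `C > 0`, depending only on `c` and `S(1)`,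
such that `ρ S(ρ/ϑ^{3/2}) ≤ C(ρ + ρ|log ρ| + ρ [log ϑ]⁺)` for all `ρ, ϑ > 0`. -/
theorem entropy_pointwise_bound (c : ℝ) (hc : 0 < c) (S : ℝ → ℝ)
    (hSreg : ContDiffOn ℝ 1 S (Ioi 0))
    (hS' : ∀ q : ℝ, 0 < q → deriv S q < 0 ∧ -deriv S q ≤ 3 * c / (2 * q))
    (hS3rd : Tendsto S atTop (nhds 0)) :
    (∀ q : ℝ, 0 < q → 0 < S q) ∧
    ∃ C : ℝ, 0 < C ∧ ∀ ρ ϑ : ℝ, 0 < ρ → 0 < ϑ →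
      ρ * S (ρ / ϑ ^ ((3 : ℝ) / 2))
        ≤ C * (ρ + ρ * |Real.log ρ| + ρ * max (Real.log ϑ) 0) :=
  entropy_pointwise_bound_general c hc S hS' hS3rd
end

section
/- Quadratic entropy bound for a monotone entropy function satisfying the third law: Let c > 0 and let S ∈ C¹((0,∞)) satisfy S′(q) < 0 and −S′(q) ≤ (3c)/(2q) for all q > 0, and lim_{q→∞} S(q) = 0. Then there is a constant C > 0, depending only on c and S(1), such that for all ρ > 0 and ϑ > 0: ρ S(ρ/ϑ^{3/2})² ≤ C(1 + ρ^{5/3} + ρϑ + ϑ²). -/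
/-!
The derivative bound `-S' ≤ a / q` with `a = 3c/2` says that `S + a log` is nondecreasing, so
`S q ≤ S 1 + a log⁺ (1/q)`; the third law and the monotonicity of `S` give `S ≥ 0`. With
`q = ρ / ϑ^{3/2}` this yields `S q ≤ S 1 + a (3/2 log⁺ ϑ + log⁺ (1/ρ))`, and the claim follows
from `(log⁺ x)² ≤ 4x`, which makes `ρ (log⁺ ϑ)² ≲ ρϑ` and `ρ (log⁺ (1/ρ))² ≲ 1`.
-/

open Real Set Filter

lemma Real.posLog_rpow {x : ℝ} (hx : 0 < x) {r : ℝ} (hr : 0 ≤ r) :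
    log⁺ (x ^ r) = r * log⁺ x := by
  simp only [posLog_apply, log_rpow hx, mul_max_of_nonneg _ _ hr, mul_zero]

lemma Real.sq_posLog_le {x : ℝ} (hx : 0 ≤ x) : log⁺ x ^ 2 ≤ 4 * x := by
  have hlog : log⁺ x ≤ 2 * √x := by
    refine max_le (by positivity) ?_
    simpa [sqrt_eq_rpow, div_eq_mul_inv, mul_comm] using log_le_rpow_div hx one_half_pos
  calc log⁺ x ^ 2 ≤ (2 * √x) ^ 2 := by gcongr; exact posLog_nonneg
    _ = 4 * x := by rw [mul_pow, sq_sqrt hx]; norm_num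

lemma Real.mul_sq_posLog_inv_le {x : ℝ} (hx : 0 < x) : x * log⁺ x⁻¹ ^ 2 ≤ 4 :=
  calc x * log⁺ x⁻¹ ^ 2 ≤ x * (4 * x⁻¹) := by gcongr; exact sq_posLog_le (inv_nonneg.2 hx.le)
    _ = 4 := by field_simp

lemma Real.posLog_inv_div_rpow_le {ρ ϑ : ℝ} (hϑ : 0 < ϑ) {r : ℝ} (hr : 0 ≤ r) :
    log⁺ (ρ / ϑ ^ r)⁻¹ ≤ r * log⁺ ϑ + log⁺ ρ⁻¹ := by
  rw [inv_div, div_eq_mul_inv, ← posLog_rpow hϑ hr]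
  exact posLog_mul

lemma self_le_one_add_rpow {x p : ℝ} (hx : 0 ≤ x) (hp : 1 ≤ p) : x ≤ 1 + x ^ p := by
  rcases le_total x 1 with hx1 | hx1
  · linarith [rpow_nonneg hx p]
  · linarith [self_le_rpow_of_one_le hx1 hp]

lemma AntitoneOn.le_of_tendsto_atTop {f : ℝ → ℝ} {b l : ℝ} (hf : AntitoneOn f (Ioi b))
    (hl : Tendsto f atTop (nhds l)) {x : ℝ} (hx : b < x) : l ≤ f x :=
  le_of_tendsto hl <| (eventually_ge_atTop x).mono fun _ hy => hf hx (hx.trans_le hy) hy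

lemma monotoneOn_add_mul_log_s14 {f : ℝ → ℝ} {a : ℝ} (hf : DifferentiableOn ℝ f (Ioi 0))
    (hf' : ∀ x, 0 < x → -deriv f x ≤ a / x) :
    MonotoneOn (fun x => f x + a * log x) (Ioi 0) := by
  have hg (x : ℝ) (hx : x ∈ Ioi 0) :
      HasDerivAt (fun x => f x + a * log x) (deriv f x + a * x⁻¹) x :=
    (hf.differentiableAt (Ioi_mem_nhds hx)).hasDerivAt.add
      ((hasDerivAt_log (ne_of_gt hx)).const_mul a)
  refine monotoneOn_of_deriv_nonneg (convex_Ioi 0)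
    (fun x hx => (hg x hx).continuousAt.continuousWithinAt)
    (by rw [interior_Ioi]; exact fun x hx => (hg x hx).differentiableAt.differentiableWithinAt)
    fun x hx => ?_
  rw [interior_Ioi] at hx
  rw [(hg x hx).deriv, ← div_eq_mul_inv]
  linarith [hf' x hx]

lemma le_add_mul_posLog_inv {f : ℝ → ℝ} {a : ℝ} (ha : 0 ≤ a) (hanti : AntitoneOn f (Ioi 0))
    (hmono : MonotoneOn (fun x => f x + a * log x) (Ioi 0)) {q : ℝ} (hq : 0 < q) :
    f q ≤ f 1 + a * log⁺ q⁻¹ := by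
  have hpos : 0 ≤ a * log⁺ q⁻¹ := mul_nonneg ha posLog_nonneg
  rcases le_total 1 q with h1 | h1
  · linarith [hanti (mem_Ioi.2 one_pos) hq h1]
  · have hlog : -log q ≤ log⁺ q⁻¹ := by rw [← log_inv]; exact le_max_right _ _
    have hq1 := hmono hq (mem_Ioi.2 one_pos) h1
    simp only [log_one, mul_zero, add_zero] at hq1
    nlinarith

lemma mul_sq_add_posLog_le {ρ ϑ : ℝ} (hρ : 0 < ρ) (hϑ : 0 < ϑ) (s a : ℝ) :
    ρ * (s + a * (3 / 2 * log⁺ ϑ + log⁺ ρ⁻¹)) ^ 2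
      ≤ (3 * s ^ 2 + 27 * a ^ 2 + 1) * (1 + ρ ^ ((5 : ℝ) / 3) + ρ * ϑ + ϑ ^ 2) := by
  have hρ53 : ρ ≤ 1 + ρ ^ ((5 : ℝ) / 3) := self_le_one_add_rpow hρ.le (by norm_num)
  have hϑlog : ρ * log⁺ ϑ ^ 2 ≤ 4 * (ρ * ϑ) := by
    nlinarith [sq_posLog_le hϑ.le]
  have hρlog := mul_sq_posLog_inv_le hρ
  have hsq (x y z : ℝ) : (x + y + z) ^ 2 ≤ 3 * (x ^ 2 + y ^ 2 + z ^ 2) := by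
    nlinarith [sq_nonneg (x - y), sq_nonneg (x - z), sq_nonneg (y - z)]
  have hP : 0 ≤ ρ ^ ((5 : ℝ) / 3) := rpow_nonneg hρ.le _
  calc ρ * (s + a * (3 / 2 * log⁺ ϑ + log⁺ ρ⁻¹)) ^ 2
      ≤ ρ * (3 * (s ^ 2 + (3 / 2 * a * log⁺ ϑ) ^ 2 + (a * log⁺ ρ⁻¹) ^ 2)) := by
        gcongr; exact (le_of_eq (by ring)).trans (hsq _ _ _)
    _ = 3 * s ^ 2 * ρ + 27 / 4 * a ^ 2 * (ρ * log⁺ ϑ ^ 2) + 3 * a ^ 2 * (ρ * log⁺ ρ⁻¹ ^ 2) := by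
        ring
    _ ≤ 3 * s ^ 2 * (1 + ρ ^ ((5 : ℝ) / 3)) + 27 / 4 * a ^ 2 * (4 * (ρ * ϑ)) + 3 * a ^ 2 * 4 := by
        gcongr
    _ ≤ (3 * s ^ 2 + 27 * a ^ 2 + 1) * (1 + ρ ^ ((5 : ℝ) / 3) + ρ * ϑ + ϑ ^ 2) := by
        nlinarith [mul_nonneg (sq_nonneg a) hP, mul_nonneg (sq_nonneg s) (mul_pos hρ hϑ).le,
          mul_pos hρ hϑ, sq_nonneg ϑ, mul_nonneg (sq_nonneg s) (sq_nonneg ϑ),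
          mul_nonneg (sq_nonneg a) (sq_nonneg ϑ)]

theorem entropy_quadratic_bound_general (c : ℝ) (hc : 0 < c) (S : ℝ → ℝ)
    (hS' : ∀ q : ℝ, 0 < q → deriv S q < 0 ∧ -deriv S q ≤ 3 * c / (2 * q))
    (hS3rd : Tendsto S atTop (nhds 0)) :
    ∃ C : ℝ, 0 < C ∧ ∀ ρ ϑ : ℝ, 0 < ρ → 0 < ϑ →
      ρ * S (ρ / ϑ ^ ((3 : ℝ) / 2)) ^ 2
        ≤ C * (1 + ρ ^ ((5 : ℝ) / 3) + ρ * ϑ + ϑ ^ 2) := by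
  have hdiff : DifferentiableOn ℝ S (Ioi 0) := fun q hq =>
    (differentiableAt_of_deriv_ne_zero (hS' q hq).1.ne).differentiableWithinAt
  have hanti : AntitoneOn S (Ioi 0) :=
    (strictAntiOn_of_deriv_neg (convex_Ioi 0) hdiff.continuousOn
      fun q hq => (hS' q (interior_subset hq)).1).antitoneOn
  have hmono : MonotoneOn (fun q => S q + 3 * c / 2 * log q) (Ioi 0) :=
    monotoneOn_add_mul_log_s14 hdiff fun q hq => by rw [div_div]; exact (hS' q hq).2
  refine ⟨3 * S 1 ^ 2 + 27 * (3 * c / 2) ^ 2 + 1, by positivity, fun ρ ϑ hρ hϑ => ?_⟩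
  set q := ρ / ϑ ^ ((3 : ℝ) / 2)
  have hq : 0 < q := div_pos hρ (rpow_pos_of_pos hϑ _)
  have hSq : S q ≤ S 1 + 3 * c / 2 * (3 / 2 * log⁺ ϑ + log⁺ ρ⁻¹) :=
    (le_add_mul_posLog_inv (by positivity) hanti hmono hq).trans <| by
      gcongr; exact posLog_inv_div_rpow_le hϑ (by norm_num)
  calc ρ * S q ^ 2 ≤ ρ * (S 1 + 3 * c / 2 * (3 / 2 * log⁺ ϑ + log⁺ ρ⁻¹)) ^ 2 := by
        gcongr; exact hanti.le_of_tendsto_atTop hS3rd hq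
    _ ≤ _ := mul_sq_add_posLog_le hρ hϑ _ _

/-- **Quadratic entropy bound for a monotone entropy function satisfying the third
law.** If `S ∈ C¹((0,∞))` with `S′ < 0`, `−S′(q) ≤ 3c/(2q)` and `S(q) → 0` as
`q → ∞`, then there is `C > 0`, depending only on `c` and `S(1)`, such that
`ρ S(ρ/ϑ^{3/2})² ≤ C(1 + ρ^{5/3} + ρϑ + ϑ²)` for all `ρ, ϑ > 0`. -/
theorem entropy_quadratic_bound (c : ℝ) (hc : 0 < c) (S : ℝ → ℝ)
    (hSreg : ContDiffOn ℝ 1 S (Ioi 0))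
    (hS' : ∀ q : ℝ, 0 < q → deriv S q < 0 ∧ -deriv S q ≤ 3 * c / (2 * q))
    (hS3rd : Tendsto S atTop (nhds 0)) :
    ∃ C : ℝ, 0 < C ∧ ∀ ρ ϑ : ℝ, 0 < ρ → 0 < ϑ →
      ρ * S (ρ / ϑ ^ ((3 : ℝ) / 2)) ^ 2
        ≤ C * (1 + ρ ^ ((5 : ℝ) / 3) + ρ * ϑ + ϑ ^ 2) :=
  entropy_quadratic_bound_general c hc S hS' hS3rd
end

section
/- Control of the squared molecular entropy by the molecular internal energy and radiation energy: Let c > 0, p̄ > 0 and let P ∈ C¹((0,∞)) and S ∈ C¹((0,∞)) satisfy: P′(q) > 0 and 0 < (5/3)P(q) − P′(q)q ≤ cq for all q > 0, lim_{q→∞} P(q)/q^{5/3} = p̄, S′(q) = −(3/2)((5/3)P(q) − P′(q)q)/q², and lim_{q→∞} S(q) = 0. Define, for ρ, ϑ > 0, s_M(ρ,ϑ) = S(ρ/ϑ^{3/2}) and ρ e_M(ρ,ϑ) = (3/2)ϑ^{5/2} P(ρ/ϑ^{3/2}). Then there exists a constant C > 0, depending only on c, p̄, P(1) and S(1), such that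 for all ρ, ϑ > 0: ρ s_M(ρ,ϑ)² ≤ C(1 + ρ + ρ e_M(ρ,ϑ) + ϑ²). -/
/-!
With `q = ρ/ϑ^{3/2}` one has `ρ = ϑ^{3/2} q`, so it suffices to bound `q S(q)²` by
`2 S(1)² q + 18 c²` and to use `ϑ^{3/2} ≤ 1 + ϑ²`. Since `S′ < 0` and `S → 0` at infinity,
`0 ≤ S ≤ S(1)` on `[1, ∞)`. On `(0, 1]` the bound `(5/3)P − P′q ≤ cq` gives
`S′(q) ≥ −(3c/2)/q`, so `S(q) + (3c/2) log q` is nondecreasing and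
`S(q) ≤ S(1) − (3c/2) log q`; the logarithm is absorbed by `q log² q ≤ 4`.
-/

open Real Set Filter

lemma Real.mul_log_sq_le_four {q : ℝ} (hq : 0 < q) (hq₁ : q ≤ 1) : q * log q ^ 2 ≤ 4 := by
  have h := abs_log_mul_self_rpow_lt q (1 / 2) hq hq₁ one_half_pos
  have hsq : (q ^ (1 / 2 : ℝ)) ^ 2 = q := by
    rw [← rpow_natCast, ← rpow_mul hq.le]; norm_num
  calc q * log q ^ 2 = |log q * q ^ (1 / 2 : ℝ)| ^ 2 := by rw [sq_abs, mul_pow, hsq, mul_comm]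
    _ ≤ 2 ^ 2 := by gcongr; exact (h.trans_eq (by norm_num)).le
    _ = 4 := by norm_num

lemma Real.rpow_le_one_add_rpow {x a b : ℝ} (hx : 0 ≤ x) (ha : 0 ≤ a) (hab : a ≤ b) :
    x ^ a ≤ 1 + x ^ b := by
  rcases le_total x 1 with hx₁ | hx₁
  · linarith [rpow_le_one hx hx₁ ha, rpow_nonneg hx b]
  · linarith [rpow_le_rpow_of_exponent_le hx₁ hab]

lemma AntitoneOn.nonneg_of_tendsto_atTop_zero {f : ℝ → ℝ} {a : ℝ} (hf : AntitoneOn f (Ioi a))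
    (hlim : Tendsto f atTop (nhds 0)) {x : ℝ} (hx : a < x) : 0 ≤ f x :=
  le_of_tendsto hlim <| (eventually_ge_atTop x).mono fun _ hy =>
    hf hx (lt_of_lt_of_le hx hy) hy

lemma monotoneOn_add_mul_log_of_neg_div_le_deriv {f : ℝ → ℝ} {k : ℝ}
    (hf : DifferentiableOn ℝ f (Ioi 0)) (hf' : ∀ q, 0 < q → -k / q ≤ deriv f q) :
    MonotoneOn (fun q => f q + k * log q) (Ioi 0) := by
  have hderiv : ∀ q, 0 < q → HasDerivAt (fun q => f q + k * log q) (deriv f q + k * q⁻¹) q :=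
    fun q hq => ((hf q hq).differentiableAt (Ioi_mem_nhds hq)).hasDerivAt.add
      ((hasDerivAt_log hq.ne').const_mul k)
  refine monotoneOn_of_deriv_nonneg (convex_Ioi 0)
    (fun q hq => (hderiv q hq).continuousAt.continuousWithinAt)
    (fun q hq => (hderiv q (by rwa [interior_Ioi] at hq)).differentiableAt.differentiableWithinAt)
    fun q hq => ?_
  rw [interior_Ioi] at hq
  rw [(hderiv q hq).deriv, ← div_eq_mul_inv]
  linarith [hf' q hq, neg_div q k]

lemma mul_sq_le_of_antitoneOn_of_monotoneOn_add_mul_log {f : ℝ → ℝ} {k : ℝ}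
    (hf₀ : ∀ q, 0 < q → 0 ≤ f q) (hanti : AntitoneOn f (Ioi 0))
    (hlog : MonotoneOn (fun q => f q + k * log q) (Ioi 0)) {q : ℝ} (hq : 0 < q) :
    q * f q ^ 2 ≤ 2 * f 1 ^ 2 * q + 8 * k ^ 2 := by
  have hfq := hf₀ q hq
  rcases le_total q 1 with hq₁ | hq₁
  · have hle : f q ≤ f 1 - k * log q := by
      have := hlog hq (mem_Ioi.2 one_pos) hq₁
      simp only [log_one, mul_zero, add_zero] at this
      linarith
    have hsq : f q ^ 2 ≤ 2 * f 1 ^ 2 + 2 * k ^ 2 * log q ^ 2 := by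
      nlinarith [sq_nonneg (f 1 + k * log q)]
    have hlog_sq := mul_log_sq_le_four hq hq₁
    nlinarith [mul_le_mul_of_nonneg_left hsq hq.le, sq_nonneg k]
  · have hle : f q ≤ f 1 := hanti (mem_Ioi.2 one_pos) hq hq₁
    nlinarith [mul_le_mul_of_nonneg_left (pow_le_pow_left₀ hfq hle 2) hq.le, sq_nonneg (f 1)]

lemma mul_sq_le_of_neg_div_le_deriv_of_deriv_neg {f : ℝ → ℝ} {k : ℝ}
    (hf : DifferentiableOn ℝ f (Ioi 0)) (hf'_neg : ∀ q, 0 < q → deriv f q < 0)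
    (hf'_ge : ∀ q, 0 < q → -k / q ≤ deriv f q) (hlim : Tendsto f atTop (nhds 0))
    {q : ℝ} (hq : 0 < q) : q * f q ^ 2 ≤ 2 * f 1 ^ 2 * q + 8 * k ^ 2 := by
  have hanti : AntitoneOn f (Ioi 0) := (strictAntiOn_of_deriv_neg (convex_Ioi 0)
    hf.continuousOn fun q hq => hf'_neg q (by rwa [interior_Ioi] at hq)).antitoneOn
  exact mul_sq_le_of_antitoneOn_of_monotoneOn_add_mul_log
    (fun _ hq => hanti.nonneg_of_tendsto_atTop_zero hlim hq) hanti
    (monotoneOn_add_mul_log_of_neg_div_le_deriv hf hf'_ge) hq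

theorem molecular_entropy_controlled_by_energy_general
    (c : ℝ) (P S : ℝ → ℝ)
    (hP' : ∀ q : ℝ, 0 < q → 0 < deriv P q)
    (hPstr : ∀ q : ℝ, 0 < q →
      0 < (5 / 3) * P q - deriv P q * q ∧ (5 / 3) * P q - deriv P q * q ≤ c * q)
    (hSreg : ContDiffOn ℝ 1 S (Ioi 0))
    (hS' : ∀ q : ℝ, 0 < q →
      deriv S q = -(3 / 2) * ((5 / 3) * P q - deriv P q * q) / q ^ 2)
    (hS3rd : Tendsto S atTop (nhds 0)) :
    ∃ C : ℝ, 0 < C ∧ ∀ ρ ϑ : ℝ, 0 < ρ → 0 < ϑ →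
      ρ * S (ρ / ϑ ^ ((3 : ℝ) / 2)) ^ 2
        ≤ C * (1 + ρ + (3 / 2) * ϑ ^ ((5 : ℝ) / 2) * P (ρ / ϑ ^ ((3 : ℝ) / 2)) + ϑ ^ 2) := by
  have hP₀ : ∀ q, 0 < q → 0 ≤ P q := fun q hq => by
    nlinarith [hP' q hq, (hPstr q hq).1]
  have hS'_neg : ∀ q, 0 < q → deriv S q < 0 := fun q hq => by
    rw [hS' q hq]
    exact div_neg_of_neg_of_pos (by linarith [(hPstr q hq).1]) (by positivity)
  have hS'_ge : ∀ q, 0 < q → -(3 * c / 2) / q ≤ deriv S q := fun q hq => by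
    rw [hS' q hq, div_le_div_iff₀ hq (by positivity)]
    nlinarith [(hPstr q hq).2]
  have hq_bound : ∀ q, 0 < q → q * S q ^ 2 ≤ 2 * S 1 ^ 2 * q + 8 * (3 * c / 2) ^ 2 :=
    fun _ hq => mul_sq_le_of_neg_div_le_deriv_of_deriv_neg
      (hSreg.differentiableOn one_ne_zero) hS'_neg hS'_ge hS3rd hq
  refine ⟨2 * S 1 ^ 2 + 18 * c ^ 2 + 1, by positivity, fun ρ ϑ hρ hϑ => ?_⟩
  set T := ϑ ^ ((3 : ℝ) / 2)
  have hT : 0 < T := rpow_pos_of_pos hϑ _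
  have hρ_eq : ρ = T * (ρ / T) := (mul_div_cancel₀ ρ hT.ne').symm
  have hT_le : T ≤ 1 + ϑ ^ 2 := by
    simpa only [rpow_two] using
      rpow_le_one_add_rpow hϑ.le (by norm_num : (0 : ℝ) ≤ 3 / 2) (by norm_num : (3 / 2 : ℝ) ≤ 2)
  have hE : 0 ≤ 3 / 2 * ϑ ^ ((5 : ℝ) / 2) * P (ρ / T) :=
    mul_nonneg (by positivity) (hP₀ _ (div_pos hρ hT))
  have hρS : ρ * S (ρ / T) ^ 2 ≤ 2 * S 1 ^ 2 * ρ + 18 * c ^ 2 * T := by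
    have := mul_le_mul_of_nonneg_left (hq_bound _ (div_pos hρ hT)) hT.le
    nth_rewrite 1 [hρ_eq]
    nlinarith
  nlinarith [sq_nonneg (S 1), sq_nonneg c, mul_le_mul_of_nonneg_left hT_le (sq_nonneg c)]

/-- **Control of the squared molecular entropy by the molecular internal energy and
radiation energy.** Under the structural assumptions on the pressure profile `P` and
the entropy profile `S` (monotonicity, growth `P(q)/q^{5/3} → p̄`, the relation
`S′(q) = −(3/2)((5/3)P(q) − P′(q)q)/q²` and the third law `S(q) → 0`), there is
`C > 0`, depending only on `c`, `p̄`, `P(1)` and `S(1)`, such that for all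
`ρ, ϑ > 0`, `ρ s_M(ρ,ϑ)² ≤ C(1 + ρ + ρ e_M(ρ,ϑ) + ϑ²)`, where
`s_M(ρ,ϑ) = S(ρ/ϑ^{3/2})` and `ρ e_M(ρ,ϑ) = (3/2)ϑ^{5/2}P(ρ/ϑ^{3/2})`. -/
theorem molecular_entropy_controlled_by_energy
    (c pbar : ℝ) (hc : 0 < c) (hpbar : 0 < pbar) (P S : ℝ → ℝ)
    (hPreg : ContDiffOn ℝ 1 P (Ioi 0))
    (hP' : ∀ q : ℝ, 0 < q → 0 < deriv P q)
    (hPstr : ∀ q : ℝ, 0 < q →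
      0 < (5 / 3) * P q - deriv P q * q ∧ (5 / 3) * P q - deriv P q * q ≤ c * q)
    (hPlim : Tendsto (fun q => P q / q ^ ((5 : ℝ) / 3)) atTop (nhds pbar))
    (hSreg : ContDiffOn ℝ 1 S (Ioi 0))
    (hS' : ∀ q : ℝ, 0 < q →
      deriv S q = -(3 / 2) * ((5 / 3) * P q - deriv P q * q) / q ^ 2)
    (hS3rd : Tendsto S atTop (nhds 0)) :
    ∃ C : ℝ, 0 < C ∧ ∀ ρ ϑ : ℝ, 0 < ρ → 0 < ϑ →
      ρ * S (ρ / ϑ ^ ((3 : ℝ) / 2)) ^ 2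
        ≤ C * (1 + ρ + (3 / 2) * ϑ ^ ((5 : ℝ) / 2) * P (ρ / ϑ ^ ((3 : ℝ) / 2)) + ϑ ^ 2) :=
  molecular_entropy_controlled_by_energy_general c P S hP' hPstr hSreg hS' hS3rd
end

section
/- Pointwise coercivity inequality for temperature-dependent viscosity: Let E be a real inner product space. For every ε ∈ (0,1), for all a, b ∈ E and all ϑ > 0, θ̃ > 0: (1 + ϑ)(θ̃/ϑ)‖a − (ϑ/θ̃)b‖² ≥ (1 − ε)θ̃‖a − b‖² − ((1 − ε)/ε)(1/θ̃)(ϑ − θ̃)²‖b‖². -/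
/-!
Split `a - b = (a - (ϑ / θ̃) • b) + ((ϑ - θ̃) / θ̃) • b`, apply Young's inequality with weight `ε`
to this sum, and use `θ̃ ≤ (1 + ϑ) θ̃ / ϑ` to enlarge the weight of the first term.
-/

open scoped RealInnerProductSpace

/-- Peter–Paul form of Young's inequality; multiplied by `ε`, the gap between the two sides is
`‖ε • x - (1 - ε) • y‖ ^ 2`. -/
theorem one_sub_mul_norm_add_sq_le {E : Type*} [NormedAddCommGroup E] [InnerProductSpace ℝ E]
    {ε : ℝ} (hε : 0 < ε) (x y : E) :
    (1 - ε) * ‖x + y‖ ^ 2 ≤ ‖x‖ ^ 2 + (1 - ε) / ε * ‖y‖ ^ 2 := by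
  have hgap : ‖ε • x - (1 - ε) • y‖ ^ 2
      = ε ^ 2 * ‖x‖ ^ 2 - 2 * (ε * (1 - ε)) * ⟪x, y⟫ + (1 - ε) ^ 2 * ‖y‖ ^ 2 := by
    rw [norm_sub_sq_real, norm_smul, norm_smul, real_inner_smul_left, real_inner_smul_right,
      Real.norm_eq_abs, Real.norm_eq_abs, mul_pow, mul_pow, sq_abs, sq_abs]
    ring
  rw [norm_add_sq_real, div_mul_eq_mul_div, ← sub_nonneg]
  have hdiff : ‖x‖ ^ 2 + (1 - ε) * ‖y‖ ^ 2 / ε - (1 - ε) * (‖x‖ ^ 2 + 2 * ⟪x, y⟫ + ‖y‖ ^ 2)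
      = ‖ε • x - (1 - ε) • y‖ ^ 2 / ε := by
    rw [hgap]
    field_simp
    ring
  rw [hdiff]
  positivity

theorem viscosity_coercivity_pointwise_general
    {E : Type*} [NormedAddCommGroup E] [InnerProductSpace ℝ E]
    (ε : ℝ) (hε0 : 0 < ε) (a b : E) (ϑ θt : ℝ)
    (hϑ : 0 < ϑ) (hθt : 0 < θt) :
    (1 - ε) * θt * ‖a - b‖ ^ 2 - (1 - ε) / ε * (1 / θt) * (ϑ - θt) ^ 2 * ‖b‖ ^ 2
      ≤ (1 + ϑ) * (θt / ϑ) * ‖a - (ϑ / θt) • b‖ ^ 2 := by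
  set x := a - (ϑ / θt) • b with hx
  have hsplit : a - b = x + ((ϑ - θt) / θt) • b := by
    rw [hx, sub_div, div_self hθt.ne', sub_smul, one_smul]
    abel
  have hrest : θt * ‖((ϑ - θt) / θt) • b‖ ^ 2 = 1 / θt * (ϑ - θt) ^ 2 * ‖b‖ ^ 2 := by
    rw [norm_smul, Real.norm_eq_abs, mul_pow, sq_abs]
    field_simp
  have hweight : θt ≤ (1 + ϑ) * (θt / ϑ) := by
    rw [add_mul, one_mul, mul_div_cancel₀ _ hϑ.ne']
    linarith [div_pos hθt hϑ]
  have hyoung := mul_le_mul_of_nonneg_left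
    (one_sub_mul_norm_add_sq_le hε0 x (((ϑ - θt) / θt) • b)) hθt.le
  calc (1 - ε) * θt * ‖a - b‖ ^ 2 - (1 - ε) / ε * (1 / θt) * (ϑ - θt) ^ 2 * ‖b‖ ^ 2
      ≤ θt * ‖x‖ ^ 2 := by rw [hsplit]; linear_combination hyoung + (1 - ε) / ε * hrest
    _ ≤ (1 + ϑ) * (θt / ϑ) * ‖x‖ ^ 2 := by gcongr

/-- **Pointwise coercivity inequality for temperature-dependent viscosity.** In any
real inner product space, for every `ε ∈ (0,1)`, all vectors `a, b` and all
temperatures `ϑ, θ̃ > 0`,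
`(1+ϑ)(θ̃/ϑ)‖a − (ϑ/θ̃)b‖² ≥ (1−ε)θ̃‖a−b‖² − ((1−ε)/ε)(1/θ̃)(ϑ−θ̃)²‖b‖²`. -/
theorem viscosity_coercivity_pointwise
    {E : Type*} [NormedAddCommGroup E] [InnerProductSpace ℝ E]
    (ε : ℝ) (hε0 : 0 < ε) (hε1 : ε < 1) (a b : E) (ϑ θt : ℝ)
    (hϑ : 0 < ϑ) (hθt : 0 < θt) :
    (1 - ε) * θt * ‖a - b‖ ^ 2 - (1 - ε) / ε * (1 / θt) * (ϑ - θt) ^ 2 * ‖b‖ ^ 2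
      ≤ (1 + ϑ) * (θt / ϑ) * ‖a - (ϑ / θt) • b‖ ^ 2 :=
  viscosity_coercivity_pointwise_general ε hε0 a b ϑ θt hϑ hθt
end
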